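/- arXiv:2301.13285 — 4 statements merged into one kernel-verified Lean document; each statement's English description precedes it below -/
import Mathlib

section
/- For every n ≥ 4: if there exists a unit vector ψ in (ℂ²)^{⊗4} that admits no basis under strings of local unitaries (i.e., no 16 Kronecker products of 2×2 unitaries map ψ to an orthonormal basis of ℂ^{16}), then there exists a unit vector ψ' in (ℂ²)^{⊗n} that admits no basis under strings of local unitaries (i.e., no 2^n Kronecker products of 2×2 unitaries map ψ' to an orthonormal basis of ℂ^{2^n}). -/
/-!
Appending a qubit in a fixed unit state `p` preserves the failure. If strings `V_j` map `p ⊗ ψ`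
to an orthonormal basis, then `V_j (p ⊗ ψ) = b_j ⊗ a_j` with unit vectors `b_j ∈ ℂ²`, so
`⟨b_j, b_j'⟩ ⟨a_j, a_j'⟩ = δ_jj'`. Taking orthogonal complements is a fixed-point-free involution on
the lines of `ℂ²`, hence at least half of the `b_j` are pairwise non-orthogonal. The corresponding
`a_j` are then orthonormal, so there are exactly `2^m` of them, and the tails of those strings map
`ψ` to an orthonormal basis.
-/

open Matrix

/-- A family of vectors in `ℂ^κ` forms an orthonormal basis: the vectors are
pairwise orthogonal unit vectors and they span the whole space. -/
def IsONBasis {ι κ : Type*} [Fintype ι] [DecidableEq ι] [Fintype κ] (v : ι → κ → ℂ) : Prop :=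
  (∀ j j', star (v j) ⬝ᵥ v j' = if j = j' then 1 else 0) ∧
    Submodule.span ℂ (Set.range v) = ⊤

/-- The `n`-fold Kronecker product `U 0 ⊗ ⋯ ⊗ U (n-1)` of `2×2` matrices, acting on
`(ℂ²)^{⊗n} ≅ ℂ^{2^n}` indexed by `Fin n → Fin 2`. -/
def kronPow {n : ℕ} (U : Fin n → Matrix (Fin 2) (Fin 2) ℂ) :
    Matrix (Fin n → Fin 2) (Fin n → Fin 2) ℂ :=
  Matrix.of fun x y => ∏ k, U k (x k) (y k)

/-- An `n`-qubit state `ψ` admits a basis under local unitaries: there exist `2^n` strings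
of local `2×2` unitaries mapping `ψ` to an orthonormal basis of `ℂ^{2^n}`. -/
def AdmitsBasis (n : ℕ) (ψ : (Fin n → Fin 2) → ℂ) : Prop :=
  ∃ U : Fin (2 ^ n) → Fin n → Matrix (Fin 2) (Fin 2) ℂ,
    (∀ j k, U j k ∈ Matrix.unitaryGroup (Fin 2) ℂ) ∧
    IsONBasis (fun j => kronPow (U j) *ᵥ ψ)

theorem exists_card_le_two_mul_card_forall_ne_involution {J X : Type*} [Fintype J]
    (f : J → X) (σ : X → X) (hσ : Function.Involutive σ) (hfix : ∀ x, σ x ≠ x) :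
    ∃ T : Finset J, Fintype.card J ≤ 2 * T.card ∧ ∀ j ∈ T, ∀ j' ∈ T, f j' ≠ σ (f j) := by
  classical
  -- any linear order on `X` singles out the smaller point of each orbit `{x, σ x}`
  let _ : LinearOrder X := IsWellOrder.linearOrder WellOrderingRel
  have indep (r : X → X → Prop) (hr : ∀ a b, r a b → ¬ r b a) (T : Finset J)
      (hT : ∀ j ∈ T, r (f j) (σ (f j))) : ∀ j ∈ T, ∀ j' ∈ T, f j' ≠ σ (f j) := by
    intro j hj j' hj' h
    have := hT j' hj'
    rw [h, hσ] at this
    exact hr _ _ (hT j hj) this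
  set A := Finset.univ.filter fun j => f j < σ (f j)
  set B := Finset.univ.filter fun j => σ (f j) < f j
  have hcover : Fintype.card J ≤ A.card + B.card := by
    refine (Finset.card_le_card fun j _ => ?_).trans (Finset.card_union_le A B)
    simpa [A, B] using (hfix (f j)).symm.lt_or_gt
  rcases le_total B.card A.card with hBA | hAB
  · exact ⟨A, by omega, indep (· < ·) (fun _ _ => lt_asymm) A (by simp [A])⟩
  · exact ⟨B, by omega, indep (· > ·) (fun _ _ => lt_asymm) B (by simp [B])⟩

theorem Submodule.orthogonal_ne_self {𝕜 E : Type*} [RCLike 𝕜] [NormedAddCommGroup E]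
    [InnerProductSpace 𝕜 E] [Nontrivial E] (K : Submodule 𝕜 E) : Kᗮ ≠ K := by
  intro h
  have hK : K = ⊥ := by simpa [h] using K.inf_orthogonal_eq_bot
  rw [hK, Submodule.bot_orthogonal_eq_top] at h
  exact top_ne_bot h

section TwoDimensional

variable {𝕜 E : Type*} [RCLike 𝕜] [NormedAddCommGroup E] [InnerProductSpace 𝕜 E]
  [Fact (Module.finrank 𝕜 E = 2)]

attribute [local instance] FiniteDimensional.of_fact_finrank_eq_two

theorem span_singleton_eq_orthogonal_of_inner_eq_zero {b c : E} (hb : b ≠ 0) (hc : c ≠ 0)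
    (h : inner 𝕜 b c = 0) : 𝕜 ∙ c = (𝕜 ∙ b)ᗮ :=
  Submodule.eq_of_le_of_finrank_eq
    ((Submodule.span_singleton_le_iff_mem _ _).2
      (Submodule.mem_orthogonal_singleton_iff_inner_right.2 h))
    ((finrank_span_singleton hc).trans (Submodule.finrank_orthogonal_span_singleton hb).symm)

theorem exists_card_le_two_mul_card_forall_inner_ne_zero {J : Type*} [Fintype J] (b : J → E)
    (hb : ∀ j, b j ≠ 0) :
    ∃ T : Finset J, Fintype.card J ≤ 2 * T.card ∧ ∀ j ∈ T, ∀ j' ∈ T, inner 𝕜 (b j) (b j') ≠ 0 := by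
  have : Nontrivial E := Module.nontrivial_of_finrank_eq_succ (Fact.out : Module.finrank 𝕜 E = 2)
  obtain ⟨T, hcard, hT⟩ := exists_card_le_two_mul_card_forall_ne_involution (fun j => 𝕜 ∙ b j)
    (·ᗮ) (fun K => K.orthogonal_orthogonal) (fun K => K.orthogonal_ne_self)
  exact ⟨T, hcard, fun j hj j' hj' h =>
    hT j hj j' hj' (span_singleton_eq_orthogonal_of_inner_eq_zero (hb j) (hb j') h)⟩

end TwoDimensional

theorem exists_card_le_two_mul_card_forall_star_dotProduct_ne_zero {J : Type*} [Fintype J]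
    (b : J → Fin 2 → ℂ) (hb : ∀ j, b j ≠ 0) :
    ∃ T : Finset J, Fintype.card J ≤ 2 * T.card ∧ ∀ j ∈ T, ∀ j' ∈ T, star (b j) ⬝ᵥ b j' ≠ 0 := by
  have : Fact (Module.finrank ℂ (EuclideanSpace ℂ (Fin 2)) = 2) := ⟨finrank_euclideanSpace_fin⟩
  obtain ⟨T, hcard, hT⟩ := exists_card_le_two_mul_card_forall_inner_ne_zero (𝕜 := ℂ)
    (fun j => WithLp.toLp 2 (b j)) fun j h => hb j (by simpa using h)
  refine ⟨T, hcard, fun j hj j' hj' => ?_⟩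
  simpa [EuclideanSpace.inner_eq_star_dotProduct, dotProduct_comm] using hT j hj j' hj'

theorem orthonormal_toLp_iff {ι κ : Type*} [DecidableEq ι] [Fintype κ] (v : ι → κ → ℂ) :
    (Orthonormal ℂ fun j => (WithLp.toLp 2 (v j) : EuclideanSpace ℂ κ)) ↔
      ∀ j j', star (v j) ⬝ᵥ v j' = if j = j' then 1 else 0 := by
  simp only [orthonormal_iff_ite, EuclideanSpace.inner_eq_star_dotProduct, dotProduct_comm]

theorem isONBasis_of_orthonormal {ι κ : Type*} [Fintype ι] [DecidableEq ι] [Fintype κ]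
    (v : ι → κ → ℂ) (hv : Orthonormal ℂ fun j => (WithLp.toLp 2 (v j) : EuclideanSpace ℂ κ))
    (hcard : Fintype.card ι = Fintype.card κ) : IsONBasis v := by
  refine ⟨(orthonormal_toLp_iff v).1 hv, ?_⟩
  exact (hv.linearIndependent.map' (WithLp.linearEquiv 2 ℂ (κ → ℂ)).toLinearMap
    (WithLp.linearEquiv 2 ℂ (κ → ℂ)).ker).span_eq_top_of_card_eq_finrank'
    (hcard.trans (Module.finrank_fintype_fun_eq_card ℂ).symm)

theorem star_mulVec_dotProduct_mulVec {n R : Type*} [Fintype n] [DecidableEq n] [CommRing R]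
    [StarRing R] {U : Matrix n n R} (hU : U ∈ unitaryGroup n R) (v w : n → R) :
    star (U *ᵥ v) ⬝ᵥ (U *ᵥ w) = star v ⬝ᵥ w := by
  rw [star_mulVec, dotProduct_mulVec, vecMul_vecMul, ← star_eq_conjTranspose,
    Unitary.star_mul_self_of_mem hU, vecMul_one]

section ProductStates

variable {α R : Type*} [Fintype α] {m : ℕ}

theorem Fintype.sum_fin_succ_pi {M : Type*} [AddCommMonoid M] (f : (Fin (m + 1) → α) → M) :
    ∑ x, f x = ∑ t, ∑ r : Fin m → α, f (Fin.cons t r) := by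
  rw [← Fintype.sum_prod_type' fun t r => f (Fin.cons t r)]
  exact (Fintype.sum_equiv (Fin.consEquiv fun _ => α) _ _ fun _ => rfl).symm

variable [CommSemiring R] [StarRing R]

def tensorCons (p : α → R) (q : (Fin m → α) → R) : (Fin (m + 1) → α) → R :=
  fun x => p (x 0) * q (Fin.tail x)

theorem star_tensorCons_dotProduct (p p' : α → R) (q q' : (Fin m → α) → R) :
    star (tensorCons p q) ⬝ᵥ tensorCons p' q' = (star p ⬝ᵥ p') * (star q ⬝ᵥ q') := by
  simp only [dotProduct, Fintype.sum_fin_succ_pi, Finset.sum_mul_sum, Pi.star_apply, tensorCons,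
    Fin.cons_zero, Fin.tail_cons, star_mul']
  exact Finset.sum_congr rfl fun _ _ => Finset.sum_congr rfl fun _ _ => by ring

end ProductStates

theorem kronPow_mulVec_tensorCons {m : ℕ} (U : Fin (m + 1) → Matrix (Fin 2) (Fin 2) ℂ)
    (p : Fin 2 → ℂ) (q : (Fin m → Fin 2) → ℂ) :
    kronPow U *ᵥ tensorCons p q = tensorCons (U 0 *ᵥ p) (kronPow (fun k => U k.succ) *ᵥ q) := by
  funext x
  simp only [mulVec, dotProduct, kronPow, tensorCons, of_apply, Fintype.sum_fin_succ_pi,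
    Finset.sum_mul_sum, Fin.prod_univ_succ, Fin.cons_zero, Fin.cons_succ, Fin.tail_cons, Fin.tail]
  exact Finset.sum_congr rfl fun _ _ => Finset.sum_congr rfl fun _ _ => by ring

theorem AdmitsBasis.of_tensorCons {m : ℕ} {p : Fin 2 → ℂ} (hp : star p ⬝ᵥ p = 1)
    {ψ : (Fin m → Fin 2) → ℂ} (h : AdmitsBasis (m + 1) (tensorCons p ψ)) : AdmitsBasis m ψ := by
  obtain ⟨U, hU, horth, -⟩ := h
  set b : Fin (2 ^ (m + 1)) → Fin 2 → ℂ := fun j => U j 0 *ᵥ p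
  set a : Fin (2 ^ (m + 1)) → (Fin m → Fin 2) → ℂ := fun j => kronPow (fun k => U j k.succ) *ᵥ ψ
  have hb (j) : star (b j) ⬝ᵥ b j = 1 := (star_mulVec_dotProduct_mulVec (hU j 0) p p).trans hp
  have hba (j j') : (star (b j) ⬝ᵥ b j') * (star (a j) ⬝ᵥ a j') = if j = j' then 1 else 0 := by
    rw [← star_tensorCons_dotProduct, ← kronPow_mulVec_tensorCons, ← kronPow_mulVec_tensorCons]
    exact horth j j'
  obtain ⟨T, hTcard, hT⟩ := exists_card_le_two_mul_card_forall_star_dotProduct_ne_zero b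
    fun j h0 => by simpa [h0] using hb j
  have haT : ∀ j ∈ T, ∀ j' ∈ T, star (a j) ⬝ᵥ a j' = if j = j' then 1 else 0 := by
    intro j hj j' hj'
    by_cases hjj : j = j'
    · subst hjj
      simpa [hb j] using hba j j
    · rw [if_neg hjj]
      exact (mul_eq_zero.1 ((hba j j').trans (if_neg hjj))).resolve_left (hT j hj j' hj')
  have hoT : Orthonormal ℂ fun i : T => (WithLp.toLp 2 (a i) : EuclideanSpace ℂ (Fin m → Fin 2)) :=
    (orthonormal_toLp_iff _).2 fun i i' => by
      simp only [haT i i.2 i' i'.2, Subtype.ext_iff]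
  have hTle : T.card ≤ 2 ^ m := by
    simpa using hoT.linearIndependent.fintype_card_le_finrank
  have hT_eq : Fintype.card T = 2 ^ m := by
    rw [Fintype.card_coe]
    simp only [Fintype.card_fin, pow_succ] at hTcard
    omega
  let e : Fin (2 ^ m) ≃ T := (Fintype.equivFinOfCardEq hT_eq).symm
  exact ⟨fun i k => U (e i) k.succ, fun i k => hU _ _,
    isONBasis_of_orthonormal _ (hoT.comp e e.injective) (by simp)⟩

/-- If some four-qubit unit state admits no basis under local unitaries, then for every
`n ≥ 4` some `n`-qubit unit state admits no basis under local unitaries. -/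
theorem stmt3 (n : ℕ) (hn : 4 ≤ n)
    (h : ∃ ψ : (Fin 4 → Fin 2) → ℂ, star ψ ⬝ᵥ ψ = 1 ∧ ¬ AdmitsBasis 4 ψ) :
    ∃ ψ' : (Fin n → Fin 2) → ℂ, star ψ' ⬝ᵥ ψ' = 1 ∧ ¬ AdmitsBasis n ψ' := by
  have he₀ : star (Pi.single 0 1 : Fin 2 → ℂ) ⬝ᵥ Pi.single 0 1 = 1 := by simp
  induction n, hn using Nat.le_induction with
  | base => exact h
  | succ m _ ih =>
    obtain ⟨ψ, hψ, hψ_not⟩ := ih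
    refine ⟨tensorCons (Pi.single 0 1) ψ, ?_, fun hb => hψ_not (hb.of_tensorCons he₀)⟩
    rw [star_tensorCons_dotProduct, he₀, hψ, one_mul]
end

section
/- There is no state-independent basis construction for real four-qubit states: there do not exist 16 strings V_j = U₁^{(j)} ⊗ U₂^{(j)} ⊗ U₃^{(j)} ⊗ U₄^{(j)} (j = 1, …, 16) of 2×2 complex unitary matrices such that for every real unit vector ψ ∈ (ℂ²)^{⊗4}, the 16 vectors V_j ψ form an orthonormal basis of ℂ^{16}. -/
set_option linter.unusedSectionVars false
set_option linter.unnecessarySimpa false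
set_option maxHeartbeats 1000000

open Matrix

namespace NoSIB

section Abstract

variable {m : Type*} [Fintype m] [DecidableEq m] {ι : Type*} [DecidableEq ι]
variable (S : ι → Matrix m m ℂ)

noncomputable def Eg (p : ι × Bool) : Matrix m m ℂ := if p.2 then S p.1 else (S p.1)ᴴ

noncomputable def Wl (l : List (ι × Bool)) : Matrix m m ℂ := (l.map (Eg S)).prod

structure Good : Prop where
  unit : ∀ j, S j * (S j)ᴴ = 1
  unit' : ∀ j, (S j)ᴴ * S j = 1
  anti : ∀ j j', j ≠ j' → S j * S j' = -(S j' * S j)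

variable {S}

lemma flip_mul {X Y : Matrix m m ℂ} (h : X * Y = -(Y * X)) (h1 : X * Xᴴ = 1)
    (h2 : Xᴴ * X = 1) : Xᴴ * Y = -(Y * Xᴴ) := by
  have e1 : Xᴴ * (X * Y) * Xᴴ = Y * Xᴴ := by rw [← mul_assoc, h2, one_mul]
  rw [h] at e1
  have e2 : Xᴴ * -(Y * X) * Xᴴ = -(Xᴴ * Y) := by
    rw [mul_neg, neg_mul, ← mul_assoc, mul_assoc (Xᴴ * Y), h1, mul_one]
  rw [e2] at e1
  rw [← e1, neg_neg]

lemma Eg_anti (hg : Good S) {j j' : ι} (h : j ≠ j') (ε δ : Bool) :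
    Eg S (j, ε) * Eg S (j', δ) = -(Eg S (j', δ) * Eg S (j, ε)) := by
  have base := hg.anti j j' h
  have base' := hg.anti j' j h.symm
  have h1 : (S j)ᴴ * S j' = -(S j' * (S j)ᴴ) := flip_mul base (hg.unit j) (hg.unit' j)
  have h2 : (S j')ᴴ * S j = -(S j * (S j')ᴴ) := flip_mul base' (hg.unit j') (hg.unit' j')
  have h3 : (S j')ᴴ * (S j)ᴴ = -((S j)ᴴ * (S j')ᴴ) :=
    flip_mul (X := S j') (Y := (S j)ᴴ) (by rw [h1, neg_neg]) (hg.unit j') (hg.unit' j')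
  cases ε <;> cases δ <;> simp only [Eg, Bool.false_eq_true, if_false, if_true]
  · rw [h3, neg_neg]
  · exact h1
  · rw [h2, neg_neg]
  · exact base

lemma Wl_cons (p : ι × Bool) (t : List (ι × Bool)) :
    Wl S (p :: t) = Eg S p * Wl S t := by simp [Wl]

lemma Wl_append (l₁ l₂ : List (ι × Bool)) :
    Wl S (l₁ ++ l₂) = Wl S l₁ * Wl S l₂ := by simp [Wl]

lemma signComm (hg : Good S) (l : List (ι × Bool)) (j : ι) :
    S j * Wl S l
      = ((-1 : ℂ) ^ (l.filter (fun p => p.1 ≠ j)).length) • (Wl S l * S j) := by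
  induction l with
  | nil => simp [Wl]
  | cons p t ih =>
    rw [Wl_cons]
    by_cases hp : p.1 = j
    · have hc : S j * Eg S p = Eg S p * S j := by
        subst hp
        cases hb : p.2 <;> simp only [Eg, hb] <;>
          simp [hg.unit, hg.unit']
      have hfil : (p :: t).filter (fun p => p.1 ≠ j) = t.filter (fun p => p.1 ≠ j) := by
        simp [List.filter_cons, hp]
      rw [← mul_assoc, hc, mul_assoc, ih, hfil, mul_smul_comm, mul_assoc]
    · have ha : S j * Eg S p = -(Eg S p * S j) := by
        have := Eg_anti hg (Ne.symm hp) true p.2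
        simpa [Eg] using this
      have hfil : ((p :: t).filter (fun p => p.1 ≠ j)).length
          = (t.filter (fun p => p.1 ≠ j)).length + 1 := by
        simp [List.filter_cons, hp]
      rw [← mul_assoc, ha, neg_mul, mul_assoc, ih, hfil, pow_succ, mul_smul_comm]
      rw [mul_assoc]
      module

lemma traceZero (hg : Good S) (l : List (ι × Bool)) (j : ι)
    (hodd : Odd (l.filter (fun p => p.1 ≠ j)).length) : (Wl S l).trace = 0 := by
  have h := signComm hg l j
  rw [Odd.neg_one_pow hodd, neg_one_smul] at h
  have h2 : S j * Wl S l * (S j)ᴴ = -(Wl S l) := by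
    rw [h, neg_mul, mul_assoc, hg.unit j, mul_one]
  have h3 := congrArg Matrix.trace h2
  rw [trace_mul_cycle (S j) (Wl S l) ((S j)ᴴ), hg.unit' j, one_mul, trace_neg] at h3
  linear_combination (h3 : (Wl S l).trace = -(Wl S l).trace) / 2

def flipRev (l : List (ι × Bool)) : List (ι × Bool) := (l.map (fun p => (p.1, !p.2))).reverse

lemma Wl_flipRev_mul (hg : Good S) (l : List (ι × Bool)) :
    Wl S (flipRev l) * Wl S l = 1 := by
  induction l with
  | nil => simp [Wl, flipRev]
  | cons p t ih =>
    have h1 : flipRev (p :: t) = flipRev t ++ [(p.1, !p.2)] := by simp [flipRev]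
    have h2 : Wl S (flipRev t ++ [(p.1, !p.2)]) = Wl S (flipRev t) * Eg S (p.1, !p.2) := by
      simp [Wl]
    have h3 : Eg S (p.1, !p.2) * Eg S p = 1 := by
      cases hb : p.2 <;> simp only [Eg, hb] <;> simp [hg.unit, hg.unit']
    rw [h1, h2, Wl_cons, mul_assoc, ← mul_assoc (Eg S (p.1, !p.2)), h3, one_mul, ih]

-- counting helper
lemma countP_ne_add_count {α : Type*} [DecidableEq α] (l : List α) (a : α) :
    l.countP (fun x => x ≠ a) + l.count a = l.length := by
  induction l with
  | nil => simp
  | cons x t ih =>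
    simp only [ne_eq, decide_not] at ih ⊢
    simp only [List.countP_cons, List.count_cons, List.length_cons]
    by_cases hx : x = a <;> simp [hx] <;> omega

def emb : Fin 9 → Fin 15 := Fin.castLE (by norm_num)

def la (b : Fin 9 → Bool) : List (Fin 9) := (List.finRange 9).filter b
def lst (b : Fin 9 → Bool) : List (Fin 15 × Bool) := (la b).map (fun i => (emb i, true))

lemma count_la (b : Fin 9 → Bool) (i : Fin 9) :
    (la b).count i = if b i then 1 else 0 := by
  by_cases hb : b i
  · rw [if_pos hb]
    exact List.count_eq_one_of_mem ((List.nodup_finRange 9).filter _)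
      (by simp [la, List.mem_filter, hb])
  · rw [if_neg hb]
    exact List.count_eq_zero_of_not_mem (by simp [la, List.mem_filter, hb])

lemma cnt_eq (b : Fin 9 → Bool) (j : Fin 15) :
    ((flipRev (lst b)).countP (fun p => p.1 ≠ j))
      = (la b).countP (fun i => emb i ≠ j) := by
  simp only [flipRev, lst, List.countP_reverse, List.map_map, List.countP_map]
  rfl

lemma cnt_eq' (b : Fin 9 → Bool) (j : Fin 15) :
    ((lst b).countP (fun p => p.1 ≠ j))
      = (la b).countP (fun i => emb i ≠ j) := by
  simp only [lst, List.countP_map]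
  rfl

lemma odd_filter (b₀ b : Fin 9 → Bool) (hne : b ≠ b₀) :
    ∃ j : Fin 15,
      Odd (((flipRev (lst b₀) ++ lst b).filter (fun p => p.1 ≠ j)).length) := by
  have hlen : ∀ (c : Fin 9 → Bool) (j : Fin 15),
      ((flipRev (lst c) ++ lst b).filter (fun p => p.1 ≠ j)).length
        = (la c).countP (fun i => emb i ≠ j) + (la b).countP (fun i => emb i ≠ j) := by
    intro c j
    rw [← List.countP_eq_length_filter, List.countP_append, cnt_eq, cnt_eq']
  by_cases hpar : Odd ((la b₀).length + (la b).length)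
  · refine ⟨⟨14, by norm_num⟩, ?_⟩
    rw [hlen]
    have h14 : ∀ (c : Fin 9 → Bool),
        (la c).countP (fun i => emb i ≠ (⟨14, by norm_num⟩ : Fin 15)) = (la c).length := by
      intro c
      rw [List.countP_eq_length]
      intro i _
      simp only [decide_eq_true_eq]
      intro hcontra
      have : (emb i).val = 14 := by rw [hcontra]
      simp only [emb, Fin.castLE] at this
      omega
    rw [h14, h14]
    exact hpar
  · obtain ⟨i₀, hi₀⟩ := Function.ne_iff.mp hne
    refine ⟨emb i₀, ?_⟩
    rw [hlen]
    have hc : ∀ (c : Fin 9 → Bool),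
        (la c).countP (fun i => emb i ≠ emb i₀)
          = (la c).length - (if c i₀ then 1 else 0) := by
      intro c
      have h1 : (la c).countP (fun i => emb i ≠ emb i₀)
          = (la c).countP (fun i => i ≠ i₀) := by
        apply List.countP_congr
        intro x _
        simp only [decide_eq_true_eq]
        constructor
        · intro h h'; exact h (by rw [h'])
        · intro h h'; exact h (Fin.castLE_injective _ h')
      rw [h1]
      have := countP_ne_add_count (la c) i₀
      rw [count_la] at this
      omega
    rw [hc, hc]
    rw [Nat.not_odd_iff_even, Nat.even_iff] at hpar
    rw [Nat.odd_iff]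
    have hcnt0 := countP_ne_add_count (la b₀) i₀
    have hcnt := countP_ne_add_count (la b) i₀
    rw [count_la] at hcnt0 hcnt
    cases hb : b i₀ <;> cases hb₀ : b₀ i₀ <;>
      simp [hb, hb₀] at hi₀ hcnt hcnt0 ⊢ <;> omega

theorem noGood (S : Fin 15 → Matrix m m ℂ) (hg : Good S)
    (hcard : Fintype.card m = 16) : False := by
  set P : (Fin 9 → Bool) → Matrix m m ℂ := fun b => Wl S (lst b) with hP
  set Q : (Fin 9 → Bool) → Matrix m m ℂ := fun b => Wl S (flipRev (lst b)) with hQ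
  have key : ∀ b₀ b, (Q b₀ * P b).trace = if b = b₀ then (16 : ℂ) else 0 := by
    intro b₀ b
    by_cases hbe : b = b₀
    · subst hbe
      rw [if_pos rfl, hQ, hP, Wl_flipRev_mul hg, trace_one, hcard]
      norm_num
    · rw [if_neg hbe, hQ, hP, ← Wl_append]
      obtain ⟨j, hj⟩ := odd_filter b₀ b hbe
      exact traceZero hg _ j hj
  have li : LinearIndependent ℂ P := by
    rw [Fintype.linearIndependent_iff]
    intro g hsum b₀
    have h0 := congrArg (fun X => (Q b₀ * X).trace) hsum
    simp only [Matrix.mul_sum, Matrix.mul_smul, trace_sum, trace_smul, mul_zero,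
      Matrix.mul_zero, trace_zero, smul_eq_mul] at h0
    rw [Finset.sum_congr rfl (fun b _ => by rw [key b₀ b])] at h0
    simp only [mul_ite, mul_zero] at h0
    rw [Finset.sum_ite_eq' Finset.univ b₀ (fun b => g b * 16)] at h0
    simp only [Finset.mem_univ, if_pos] at h0
    exact (mul_eq_zero.mp h0).resolve_right (by norm_num)
  have hle := li.fintype_card_le_finrank
  rw [Module.finrank_matrix ℂ ℂ m m] at hle
  simp only [hcard, Module.finrank_self, mul_one, Fintype.card_fun, Fintype.card_bool,
    Fintype.card_fin] at hle
  norm_num at hle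

end Abstract

lemma kron_mul {n : ℕ} (A B : Fin n → Matrix (Fin 2) (Fin 2) ℂ) :
    kronPow A * kronPow B = kronPow (fun k => A k * B k) := by
  ext x y
  simp only [kronPow, Matrix.mul_apply, Matrix.of_apply]
  rw [Finset.prod_univ_sum]
  rw [Fintype.piFinset_univ]
  exact Finset.sum_congr rfl fun z _ => (Finset.prod_mul_distrib).symm

lemma kron_conjT {n : ℕ} (A : Fin n → Matrix (Fin 2) (Fin 2) ℂ) :
    (kronPow A)ᴴ = kronPow (fun k => (A k)ᴴ) := by
  ext x y
  simp only [kronPow, conjTranspose_apply, Matrix.of_apply]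
  simpa using (map_prod (starRingEnd ℂ) (fun k => A k (y k) (x k)) Finset.univ)

lemma kron_one {n : ℕ} : kronPow (fun _ : Fin n => (1 : Matrix (Fin 2) (Fin 2) ℂ)) = 1 := by
  ext x y
  simp only [kronPow, Matrix.of_apply]
  by_cases h : x = y
  · subst h; simp [Matrix.one_apply]
  · rw [Matrix.one_apply_ne h]
    obtain ⟨k, hk⟩ := Function.ne_iff.mp h
    exact Finset.prod_eq_zero (Finset.mem_univ k) (Matrix.one_apply_ne hk)

-- test vectors
variable {κ : Type*} [Fintype κ] [DecidableEq κ]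

def ev (x : κ) : κ → ℂ := fun z => if z = x then 1 else 0

lemma ev_real (x : κ) : ∀ z, (ev x z).im = 0 := by
  intro z; simp only [ev]; split <;> simp

lemma star_of_real {ψ : κ → ℂ} (h : ∀ z, (ψ z).im = 0) : star ψ = ψ := by
  funext z
  simp only [Pi.star_apply]
  exact Complex.conj_eq_iff_im.mpr (h z)

lemma ev_dot (x y : κ) : ev x ⬝ᵥ ev y = if x = y then 1 else 0 := by
  simp only [ev, dotProduct]
  rw [Finset.sum_eq_single x]
  · simp [eq_comm]
  · intro z _ hz; simp [hz]
  · intro h; exact absurd (Finset.mem_univ x) h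

lemma dot_ev (M : Matrix κ κ ℂ) (x y : κ) : ev x ⬝ᵥ (M *ᵥ ev y) = M x y := by
  simp only [ev, dotProduct, Matrix.mulVec, Finset.sum_ite_eq', Finset.mem_univ, if_true]
  rw [Finset.sum_eq_single x]
  · simp
  · intro z _ hz; simp [hz]
  · intro h; exact absurd (Finset.mem_univ x) h


end NoSIB

open NoSIB in
/-- There is no state-independent basis construction for real four-qubit states: no 16
strings of local `2×2` unitaries map every real unit vector of `(ℂ²)^{⊗4}` to an
orthonormal basis of `ℂ^{16}`. -/
theorem stmt12 :
    ¬ ∃ U : Fin (2 ^ 4) → Fin 4 → Matrix (Fin 2) (Fin 2) ℂ,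
      (∀ j k, U j k ∈ Matrix.unitaryGroup (Fin 2) ℂ) ∧
      ∀ ψ : (Fin 4 → Fin 2) → ℂ, (∀ x, (ψ x).im = 0) → star ψ ⬝ᵥ ψ = 1 →
        IsONBasis (fun j => kronPow (U j) *ᵥ ψ) := by
  rintro ⟨U, hU, hON⟩
  set V : Fin (2 ^ 4) → Matrix (Fin 4 → Fin 2) (Fin 4 → Fin 2) ℂ :=
    fun j => kronPow (U j) with hV
  -- unitarity of V j
  have hVu : ∀ j, V j * (V j)ᴴ = 1 := by
    intro j
    rw [hV, kron_conjT, kron_mul]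
    have : (fun k => U j k * (U j k)ᴴ) = fun _ : Fin 4 => (1 : Matrix (Fin 2) (Fin 2) ℂ) := by
      funext k
      have := (Matrix.mem_unitaryGroup_iff).mp (hU j k)
      rwa [Matrix.star_eq_conjTranspose] at this
    rw [this, kron_one]
  have hVu' : ∀ j, (V j)ᴴ * V j = 1 := by
    intro j
    rw [hV, kron_conjT, kron_mul]
    have : (fun k => (U j k)ᴴ * U j k) = fun _ : Fin 4 => (1 : Matrix (Fin 2) (Fin 2) ℂ) := by
      funext k
      have := (Matrix.mem_unitaryGroup_iff').mp (hU j k)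
      rwa [Matrix.star_eq_conjTranspose] at this
    rw [this, kron_one]
  -- orthogonality ⇒ quadratic form vanishes on real unit vectors
  have horth : ∀ j j', j ≠ j' → ∀ ψ : (Fin 4 → Fin 2) → ℂ,
      (∀ x, (ψ x).im = 0) → star ψ ⬝ᵥ ψ = 1 →
      ψ ⬝ᵥ (((V j)ᴴ * V j') *ᵥ ψ) = 0 := by
    intro j j' hjj ψ hre hunit
    have h := (hON ψ hre hunit).1 j j'
    rw [if_neg hjj] at h
    rw [star_mulVec, dotProduct_mulVec, vecMul_vecMul, ← dotProduct_mulVec,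
      star_of_real hre] at h
    exact h
  -- the quadratic form vanishing on all real vectors ⇒ antisymmetry
  have hfull : ∀ j j', j ≠ j' → ∀ x y,
      ((V j)ᴴ * V j') x y + ((V j)ᴴ * V j') y x = 0 := by
    intro j j' hjj x y
    set M := (V j)ᴴ * V j' with hM
    have hdiag : ∀ z, M z z = 0 := by
      intro z
      have := horth j j' hjj (ev z) (ev_real z)
        (by rw [star_of_real (ev_real z), ev_dot, if_pos rfl])
      rwa [dot_ev] at this
    by_cases hxy : x = y
    · subst hxy; rw [hdiag x, add_zero]
    · set c : ℝ := (Real.sqrt 2)⁻¹ with hc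
      have hc0 : (c : ℂ) ≠ 0 := by
        simp [hc, Real.sqrt_eq_zero']
      have hs2 : ((Real.sqrt 2 : ℝ) : ℂ) * ((Real.sqrt 2 : ℝ) : ℂ) = 2 := by
        norm_cast
        rw [Real.mul_self_sqrt (by norm_num : (0:ℝ) ≤ 2)]
      have hc2 : (c : ℂ) * (c : ℂ) * 2 = 1 := by
        rw [hc]
        push_cast
        rw [← mul_inv, hs2]
        norm_num
      set ψ : (Fin 4 → Fin 2) → ℂ := (c : ℂ) • (ev x + ev y) with hψ
      have hre : ∀ z, (ψ z).im = 0 := by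
        intro z
        rw [hψ]
        simp only [Pi.smul_apply, Pi.add_apply, smul_eq_mul, Complex.mul_im,
          Complex.add_im, ev_real x z, ev_real y z, Complex.ofReal_im, add_zero,
          zero_mul, mul_zero, zero_add]
      have hunit : star ψ ⬝ᵥ ψ = 1 := by
        rw [star_of_real hre, hψ]
        rw [smul_dotProduct, dotProduct_smul, add_dotProduct, dotProduct_add,
          dotProduct_add, ev_dot, ev_dot, ev_dot, ev_dot]
        rw [if_pos rfl, if_pos rfl, if_neg hxy, if_neg (Ne.symm hxy)]
        rw [smul_eq_mul, smul_eq_mul]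
        ring_nf
        linear_combination hc2
      have hq := horth j j' hjj ψ hre hunit
      rw [hψ, mulVec_smul, smul_dotProduct, dotProduct_smul] at hq
      rw [mulVec_add, add_dotProduct, dotProduct_add, dotProduct_add,
        dot_ev, dot_ev, dot_ev, dot_ev] at hq
      simp only [← hM, smul_eq_mul] at hq
      have : (c:ℂ) * ((c:ℂ) * (M x y + M y x)) = 0 := by
        linear_combination hq - (c:ℂ)*(c:ℂ)*hdiag x - (c:ℂ)*(c:ℂ)*hdiag y
      have h2 := mul_eq_zero.mp this
      rcases h2 with h2 | h2
      · exact absurd h2 hc0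
      rcases mul_eq_zero.mp h2 with h3 | h3
      · exact absurd h3 hc0
      · exact h3
  -- antisymmetry as matrix identity
  have hMT : ∀ j j', j ≠ j' → ((V j)ᴴ * V j')ᵀ = -((V j)ᴴ * V j') := by
    intro j j' hjj
    ext x y
    rw [transpose_apply, Matrix.neg_apply]
    have := hfull j j' hjj y x
    linear_combination this
  -- build the anticommuting family
  have h16 : (2:ℕ)^4 = 16 := by norm_num
  set isucc : Fin 15 → Fin (2^4) := fun i => ⟨i.val + 1, by omega⟩ with hisucc
  have hisucc_ne : ∀ i, isucc i ≠ 0 := by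
    intro i
    rw [hisucc]
    intro h
    have := congrArg Fin.val h
    simp at this
  have hisucc_inj : ∀ i i', i ≠ i' → isucc i ≠ isucc i' := by
    intro i i' h hcontra
    have := congrArg Fin.val hcontra
    simp [hisucc] at this
    exact h (Fin.val_injective this)
  set S : Fin 15 → Matrix (Fin 4 → Fin 2) (Fin 4 → Fin 2) ℂ :=
    fun i => (V 0)ᴴ * V (isucc i) with hS
  have hSu : ∀ i, S i * (S i)ᴴ = 1 := by
    intro i
    rw [hS]
    simp only [conjTranspose_mul, conjTranspose_conjTranspose]
    calc (V 0)ᴴ * V (isucc i) * ((V (isucc i))ᴴ * V 0)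
        = (V 0)ᴴ * (V (isucc i) * (V (isucc i))ᴴ) * V 0 := by simp only [mul_assoc]
      _ = 1 := by rw [hVu (isucc i), mul_one, hVu' 0]
  have hSu' : ∀ i, (S i)ᴴ * S i = 1 := by
    intro i
    rw [hS]
    simp only [conjTranspose_mul, conjTranspose_conjTranspose]
    calc (V (isucc i))ᴴ * V 0 * ((V 0)ᴴ * V (isucc i))
        = (V (isucc i))ᴴ * (V 0 * (V 0)ᴴ) * V (isucc i) := by simp only [mul_assoc]
      _ = 1 := by rw [hVu 0, mul_one, hVu' (isucc i)]
  have hanti : ∀ i i', i ≠ i' → S i * S i' = -(S i' * S i) := by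
    intro i i' hne
    have hA : (S i)ᵀ = -(S i) := hMT 0 (isucc i) (Ne.symm (hisucc_ne i))
    have hB : (S i')ᵀ = -(S i') := hMT 0 (isucc i') (Ne.symm (hisucc_ne i'))
    have hAB : (S i)ᴴ * S i' = (V (isucc i))ᴴ * V (isucc i') := by
      rw [hS]
      simp only [conjTranspose_mul, conjTranspose_conjTranspose]
      rw [mul_assoc, ← mul_assoc (V 0), hVu 0, one_mul]
    have hABT : ((S i)ᴴ * S i')ᵀ = -((S i)ᴴ * S i') := by
      rw [hAB]
      exact hMT (isucc i) (isucc i') (hisucc_inj i i' hne)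
    -- compute the transpose of the product
    have hT : ((S i)ᴴ * S i')ᵀ = S i' * (S i)ᴴ := by
      rw [transpose_mul]
      have h1 : ((S i)ᴴ)ᵀ = ((S i)ᵀ)ᴴ := rfl
      rw [h1, hA, hB]
      simp only [conjTranspose_neg, neg_mul, mul_neg, neg_neg]
    have key : S i' * (S i)ᴴ = -((S i)ᴴ * S i') := by rw [← hT, hABT]
    calc S i * S i' = S i * S i' * ((S i)ᴴ * S i) := by rw [hSu' i, mul_one]
      _ = S i * (S i' * (S i)ᴴ) * S i := by simp only [mul_assoc]
      _ = S i * (-((S i)ᴴ * S i')) * S i := by rw [key]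
      _ = -(S i * ((S i)ᴴ * (S i' * S i))) := by simp only [mul_neg, neg_mul, mul_assoc]
      _ = -((S i * (S i)ᴴ) * (S i' * S i)) := by simp only [mul_assoc]
      _ = -(S i' * S i) := by rw [hSu i, one_mul]
  exact noGood S ⟨hSu, hSu', hanti⟩ (by simp)
end

section
/- If there exists a state-independent basis construction for real (n+1)-qubit states (i.e., 2^{n+1} strings V'_j of (n+1)-fold Kronecker products of 2×2 complex unitaries such that (V'_j ψ')_j is an orthonormal basis of ℂ^{2^{n+1}} for every real unit vector ψ' ∈ (ℂ²)^{⊗(n+1)}), then there exists a state-independent basis construction for real n-qubit states (i.e., 2^n strings V_j of n-fold Kronecker products of 2×2 complex unitaries such that (V_j ψ)_j is an orthonormal basis of ℂ^{2^n} for every real unit vector ψ ∈ (ℂ²)^{⊗n}). -/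
open Matrix

/-- A state-independent basis construction for real `n`-qubit states: `2^n` strings of local
`2×2` unitaries mapping every real unit vector of `(ℂ²)^{⊗n}` to an orthonormal basis. -/
def IsSIConstruction (n : ℕ) (U : Fin (2 ^ n) → Fin n → Matrix (Fin 2) (Fin 2) ℂ) : Prop :=
  (∀ j k, U j k ∈ Matrix.unitaryGroup (Fin 2) ℂ) ∧
  ∀ ψ : (Fin n → Fin 2) → ℂ, (∀ x, (ψ x).im = 0) → star ψ ⬝ᵥ ψ = 1 →
    IsONBasis (fun j => kronPow (U j) *ᵥ ψ)

/-! ### Auxiliary lemmas -/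

section Geometry

local notation "conj'" => (starRingEnd ℂ)

private lemma dot2 (x z : Fin 2 → ℂ) : star x ⬝ᵥ z = conj' (x 0) * z 0 + conj' (x 1) * z 1 := by
  simp [dotProduct, Fin.sum_univ_two]

private lemma dot_comm (x z : Fin 2 → ℂ) : star x ⬝ᵥ z = conj' (star z ⬝ᵥ x) := by
  simp [dot2, map_add, _root_.map_mul]; ring

private lemma dot_comm_ne {x z : Fin 2 → ℂ} (h : star x ⬝ᵥ z ≠ 0) : star z ⬝ᵥ x ≠ 0 := by
  intro hc; apply h; rw [dot_comm, hc, map_zero]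

private lemma dot_parallel {y x z : Fin 2 → ℂ} (hy : star y ⬝ᵥ y ≠ 0)
    (h1 : star y ⬝ᵥ x = 0) (h2 : star y ⬝ᵥ z = 0) : x 0 * z 1 = x 1 * z 0 := by
  rw [dot2] at h1 h2
  have hy' : y 0 ≠ 0 ∨ y 1 ≠ 0 := by
    by_contra hc
    push_neg at hc
    apply hy
    rw [dot2, hc.1, hc.2]; ring
  rcases hy' with h | h
  · have h' : conj' (y 0) ≠ 0 := by simpa using h
    have hz : conj' (y 0) * (x 0 * z 1 - x 1 * z 0) = 0 := by
      linear_combination z 1 * h1 - x 1 * h2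
    rcases mul_eq_zero.mp hz with hh | hh
    · exact absurd hh h'
    · exact sub_eq_zero.mp hh
  · have h' : conj' (y 1) ≠ 0 := by simpa using h
    have hz : conj' (y 1) * (x 0 * z 1 - x 1 * z 0) = 0 := by
      linear_combination x 0 * h2 - z 0 * h1
    rcases mul_eq_zero.mp hz with hh | hh
    · exact absurd hh h'
    · exact sub_eq_zero.mp hh

/-- Two nonzero vectors in ℂ² orthogonal to a common nonzero vector are non-orthogonal. -/
private lemma dot_ne_zero_of_common {y x z : Fin 2 → ℂ} (hy : star y ⬝ᵥ y ≠ 0)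
    (hx : star x ⬝ᵥ x ≠ 0) (hz : star z ⬝ᵥ z ≠ 0)
    (h1 : star y ⬝ᵥ x = 0) (h2 : star y ⬝ᵥ z = 0) : star x ⬝ᵥ z ≠ 0 := by
  intro hd
  have hp := dot_parallel hy h1 h2
  rw [dot2] at hd
  apply hz
  rw [dot2]
  have hz0 : (conj' (x 0) * x 0 + conj' (x 1) * x 1) * z 0 = 0 := by
    linear_combination x 0 * hd - conj' (x 1) * hp
  have hz1 : (conj' (x 0) * x 0 + conj' (x 1) * x 1) * z 1 = 0 := by
    linear_combination x 1 * hd + conj' (x 0) * hp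
  have hxx : (conj' (x 0) * x 0 + conj' (x 1) * x 1) ≠ 0 := by rw [dot2] at hx; exact hx
  have e0 : z 0 = 0 := by rcases mul_eq_zero.mp hz0 with h|h; exact absurd h hxx; exact h
  have e1 : z 1 = 0 := by rcases mul_eq_zero.mp hz1 with h|h; exact absurd h hxx; exact h
  rw [e0, e1]; ring

/-- Transfer of orthogonality along a parallel pair: x,z both ⊥ y, w ⊥ x ⇒ w ⊥ z. -/
private lemma dot_transfer {y x z w : Fin 2 → ℂ} (hy : star y ⬝ᵥ y ≠ 0) (hx : star x ⬝ᵥ x ≠ 0)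
    (h1 : star y ⬝ᵥ x = 0) (h2 : star y ⬝ᵥ z = 0) (h3 : star x ⬝ᵥ w = 0) :
    star z ⬝ᵥ w = 0 := by
  have hp := dot_parallel hy h1 h2
  have hpc : conj' (x 0) * conj' (z 1) = conj' (x 1) * conj' (z 0) := by
    have := congrArg conj' hp
    simpa [_root_.map_mul] using this
  rw [dot2] at h3 hx ⊢
  have key : (conj' (x 0) * x 0 + conj' (x 1) * x 1) *
      (conj' (z 0) * w 0 + conj' (z 1) * w 1) = 0 := by
    linear_combination (x 0 * conj' (z 0) + x 1 * conj' (z 1)) * h3 +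
      (x 0 * w 1 - x 1 * w 0) * hpc
  rcases mul_eq_zero.mp key with h|h
  · exact absurd h hx
  · exact h

/-- From any finite family of nonzero vectors in ℂ², at least half of them can be chosen
pairwise non-orthogonal. -/
private lemma select {ι : Type*} [DecidableEq ι] (v : ι → Fin 2 → ℂ)
    (hv : ∀ i, star (v i) ⬝ᵥ v i ≠ 0) (s : Finset ι) :
    ∃ t ⊆ s, s.card ≤ 2 * t.card ∧ ∀ i ∈ t, ∀ j ∈ t, star (v i) ⬝ᵥ v j ≠ 0 := by
  classical
  induction s using Finset.strongInductionOn with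
  | _ s ih =>
  rcases s.eq_empty_or_nonempty with rfl | ⟨a, ha⟩
  · exact ⟨∅, Finset.Subset.refl _, by simp, by simp⟩
  set B : Finset ι := s.filter (fun k => star (v a) ⬝ᵥ v k = 0) with hBdef
  have haB : a ∉ B := by
    simp only [hBdef, Finset.mem_filter]
    rintro ⟨-, h⟩; exact hv a h
  rcases B.eq_empty_or_nonempty with hBe | ⟨b, hb⟩
  · -- nothing in s orthogonal to a
    have hsub : s.erase a ⊂ s := Finset.erase_ssubset ha
    obtain ⟨t', ht's, ht'card, ht'p⟩ := ih _ hsub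
    have hat' : a ∉ t' := fun hc => (Finset.notMem_erase a s) (ht's hc)
    refine ⟨insert a t', ?_, ?_, ?_⟩
    · exact Finset.insert_subset ha (ht's.trans (Finset.erase_subset _ _))
    · rw [Finset.card_insert_of_notMem hat']
      have := Finset.card_erase_of_mem ha
      omega
    · have key : ∀ k ∈ s, star (v a) ⬝ᵥ v k ≠ 0 := by
        intro k hk hc
        have : k ∈ B := Finset.mem_filter.mpr ⟨hk, hc⟩
        rw [hBe] at this; exact absurd this (Finset.notMem_empty k)
      intro i hi j hj
      rcases Finset.mem_insert.mp hi with rfl | hi' <;>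
        rcases Finset.mem_insert.mp hj with rfl | hj'
      · exact hv _
      · exact key j (ht's.trans (Finset.erase_subset _ _) hj')
      · exact dot_comm_ne (key i (ht's.trans (Finset.erase_subset _ _) hi'))
      · exact ht'p i hi' j hj'
  · -- b ∈ s orthogonal to a
    have hbs : b ∈ s := (Finset.mem_filter.mp hb).1
    have hab : star (v a) ⬝ᵥ v b = 0 := (Finset.mem_filter.mp hb).2
    have hba : star (v b) ⬝ᵥ v a = 0 := by rw [dot_comm, hab, map_zero]
    set A : Finset ι := s.filter (fun k => star (v b) ⬝ᵥ v k = 0) with hAdef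
    have haA : a ∈ A := Finset.mem_filter.mpr ⟨ha, hba⟩
    have hdisj : Disjoint A B := by
      rw [Finset.disjoint_left]
      intro k hkA hkB
      have h1 : star (v b) ⬝ᵥ v k = 0 := (Finset.mem_filter.mp hkA).2
      have h2 : star (v a) ⬝ᵥ v k = 0 := (Finset.mem_filter.mp hkB).2
      exact dot_ne_zero_of_common (hv a) (hv b) (hv k) hab h2 h1
    have hAcl : ∀ i ∈ A, ∀ j ∈ A, star (v i) ⬝ᵥ v j ≠ 0 := by
      intro i hi j hj
      exact dot_ne_zero_of_common (hv b) (hv i) (hv j)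
        (Finset.mem_filter.mp hi).2 (Finset.mem_filter.mp hj).2
    have hBcl : ∀ i ∈ B, ∀ j ∈ B, star (v i) ⬝ᵥ v j ≠ 0 := by
      intro i hi j hj
      exact dot_ne_zero_of_common (hv a) (hv i) (hv j)
        (Finset.mem_filter.mp hi).2 (Finset.mem_filter.mp hj).2
    have hcross : ∀ k ∈ s \ (A ∪ B), ∀ j ∈ A ∪ B, star (v j) ⬝ᵥ v k ≠ 0 := by
      intro k hk j hj
      have hks : k ∈ s := (Finset.mem_sdiff.mp hk).1
      have hknAB := (Finset.mem_sdiff.mp hk).2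
      have hknA : star (v b) ⬝ᵥ v k ≠ 0 := by
        intro hc
        exact hknAB (Finset.mem_union_left _ (Finset.mem_filter.mpr ⟨hks, hc⟩))
      have hknB : star (v a) ⬝ᵥ v k ≠ 0 := by
        intro hc
        exact hknAB (Finset.mem_union_right _ (Finset.mem_filter.mpr ⟨hks, hc⟩))
      rcases Finset.mem_union.mp hj with hjA | hjB
      · intro hc
        exact hknB (dot_transfer (hv b) (hv j) (Finset.mem_filter.mp hjA).2 hba hc)
      · intro hc
        exact hknA (dot_transfer (hv a) (hv j) (Finset.mem_filter.mp hjB).2 hab hc)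
    have hABsub : A ∪ B ⊆ s :=
      Finset.union_subset (Finset.filter_subset _ _) (Finset.filter_subset _ _)
    have hssub : s \ (A ∪ B) ⊂ s := by
      apply Finset.sdiff_ssubset hABsub
      exact ⟨a, Finset.mem_union_left _ haA⟩
    obtain ⟨t', ht's, ht'card, ht'p⟩ := ih _ hssub
    set D : Finset ι := if A.card ≤ B.card then B else A with hDdef
    have hDsub : D ⊆ A ∪ B := by
      rw [hDdef]; split
      · exact Finset.subset_union_right
      · exact Finset.subset_union_left
    have hDcl : ∀ i ∈ D, ∀ j ∈ D, star (v i) ⬝ᵥ v j ≠ 0 := by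
      rw [hDdef]; split
      · exact hBcl
      · exact hAcl
    have hDcard : (A ∪ B).card ≤ 2 * D.card := by
      rw [Finset.card_union_of_disjoint hdisj, hDdef]
      split <;> omega
    have htD : Disjoint t' D := by
      rw [Finset.disjoint_left]
      intro k hk hkD
      exact (Finset.mem_sdiff.mp (ht's hk)).2 (hDsub hkD)
    refine ⟨t' ∪ D, ?_, ?_, ?_⟩
    · exact Finset.union_subset (ht's.trans (Finset.sdiff_subset)) (hDsub.trans hABsub)
    · rw [Finset.card_union_of_disjoint htD]
      have := Finset.card_sdiff_add_card_eq_card hABsub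
      omega
    · intro i hi j hj
      rcases Finset.mem_union.mp hi with hi' | hi' <;>
        rcases Finset.mem_union.mp hj with hj' | hj'
      · exact ht'p i hi' j hj'
      · exact dot_comm_ne (hcross i (ht's hi') j (hDsub hj'))
      · exact hcross j (ht's hj') i (hDsub hi')
      · exact hDcl i hi' j hj'

end Geometry

section Tensor
variable {n : ℕ}

/-- Embed an `n`-qubit state as an `(n+1)`-qubit state by tensoring `|0⟩` on qubit 0. -/
private def extState (ψ : (Fin n → Fin 2) → ℂ) : (Fin (n + 1) → Fin 2) → ℂ :=
  fun x => if x 0 = 0 then ψ (fun k => x k.succ) else 0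

private lemma mulvec_fact (V : Fin (n + 1) → Matrix (Fin 2) (Fin 2) ℂ)
    (ψ : (Fin n → Fin 2) → ℂ) (x : Fin (n + 1) → Fin 2) :
    (kronPow V *ᵥ extState ψ) x
      = V 0 (x 0) 0 * ((kronPow (fun k => V k.succ)) *ᵥ ψ) (fun k => x k.succ) := by
  simp only [mulVec, dotProduct, kronPow, of_apply]
  rw [← Fintype.sum_equiv (Fin.consEquiv fun _ => Fin 2)
    (fun p => (∏ k, V k (x k) ((Fin.cons p.1 p.2 : ∀ _ : Fin (n+1), Fin 2) k)) *
      extState ψ (Fin.cons p.1 p.2)) _ (fun p => rfl)]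
  rw [Fintype.sum_prod_type, Fin.sum_univ_two]
  simp only [extState, Fin.cons_zero, Fin.cons_succ, Fin.prod_univ_succ, if_true,
    eq_self_iff_true]
  have h1 : ((1 : Fin 2) = 0) = False := by simp
  simp only [h1, if_false, mul_zero, Finset.sum_const_zero, add_zero]
  rw [Finset.mul_sum]
  apply Finset.sum_congr rfl
  intro q _
  ring

private lemma ext_real (ψ : (Fin n → Fin 2) → ℂ) (hψ : ∀ x, (ψ x).im = 0) :
    ∀ x, (extState ψ x).im = 0 := by
  intro x
  unfold extState
  split
  · exact hψ _
  · simp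

private lemma ext_norm (ψ : (Fin n → Fin 2) → ℂ) :
    star (extState ψ) ⬝ᵥ extState ψ = star ψ ⬝ᵥ ψ := by
  simp only [dotProduct, Pi.star_apply]
  rw [← Fintype.sum_equiv (Fin.consEquiv fun _ => Fin 2)
    (fun p => star (extState ψ (Fin.cons p.1 p.2)) * extState ψ (Fin.cons p.1 p.2)) _
    (fun p => rfl)]
  rw [Fintype.sum_prod_type, Fin.sum_univ_two]
  have h1 : ((1 : Fin 2) = 0) = False := by simp
  simp only [extState, Fin.cons_zero, h1, if_false, if_true, star_zero, mul_zero, zero_mul,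
    Finset.sum_const_zero, add_zero, Fin.cons_succ, if_pos rfl]

private lemma gram_fact (V V' : Fin (n + 1) → Matrix (Fin 2) (Fin 2) ℂ)
    (ψ : (Fin n → Fin 2) → ℂ) :
    star (kronPow V *ᵥ extState ψ) ⬝ᵥ (kronPow V' *ᵥ extState ψ)
      = (star (fun b => V 0 b 0) ⬝ᵥ (fun b => V' 0 b 0)) *
        (star (kronPow (fun k => V k.succ) *ᵥ ψ) ⬝ᵥ (kronPow (fun k => V' k.succ) *ᵥ ψ)) := by
  simp only [dotProduct, Pi.star_apply]
  rw [Finset.sum_mul_sum]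
  rw [← Fintype.sum_equiv (Fin.consEquiv fun _ => Fin 2)
    (fun p => star ((kronPow V *ᵥ extState ψ) (Fin.cons p.1 p.2)) *
      (kronPow V' *ᵥ extState ψ) (Fin.cons p.1 p.2)) _ (fun p => rfl)]
  rw [Fintype.sum_prod_type]
  apply Finset.sum_congr rfl
  intro b _
  apply Finset.sum_congr rfl
  intro q _
  rw [mulvec_fact, mulvec_fact]
  simp only [Fin.cons_zero, Fin.cons_succ]
  rw [star_mul']
  ring

end Tensor

private lemma span_of_gram {m : ℕ} (g : Fin (2 ^ m) → (Fin m → Fin 2) → ℂ)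
    (hg : ∀ j j', star (g j) ⬝ᵥ g j' = if j = j' then 1 else 0) :
    Submodule.span ℂ (Set.range g) = ⊤ := by
  haveI : Nonempty (Fin (2 ^ m)) := ⟨⟨0, by positivity⟩⟩
  have hli : LinearIndependent ℂ g := by
    rw [Fintype.linearIndependent_iff]
    intro c hc j
    have h0 : star (g j) ⬝ᵥ (∑ i, c i • g i) = ∑ i, c i * (star (g j) ⬝ᵥ g i) := by
      simp only [dotProduct, Finset.sum_apply, Pi.smul_apply, smul_eq_mul, Finset.mul_sum]
      rw [Finset.sum_comm]
      exact Finset.sum_congr rfl fun i _ => Finset.sum_congr rfl fun x _ => by ring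
    rw [hc] at h0
    simp only [hg, mul_ite, mul_one, mul_zero, Finset.sum_ite_eq, Finset.mem_univ,
      if_true, dotProduct_zero] at h0
    exact h0.symm
  apply hli.span_eq_top_of_card_eq_finrank
  simp [Module.finrank_pi, Fintype.card_fun]

/-- If a state-independent basis construction exists for real `(n+1)`-qubit states,
then one exists for real `n`-qubit states. -/
theorem stmt13 (n : ℕ)
    (h : ∃ U' : Fin (2 ^ (n + 1)) → Fin (n + 1) → Matrix (Fin 2) (Fin 2) ℂ,
      IsSIConstruction (n + 1) U') :
    ∃ U : Fin (2 ^ n) → Fin n → Matrix (Fin 2) (Fin 2) ℂ, IsSIConstruction n U := by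
  classical
  obtain ⟨U', hU'u, hU'b⟩ := h
  -- the column-0 vectors of the local unitaries acting on qubit 0
  set u : Fin (2 ^ (n + 1)) → Fin 2 → ℂ := fun j b => U' j 0 b 0 with hu
  have huu : ∀ j, star (u j) ⬝ᵥ u j = 1 := by
    intro j
    have hmem : star (U' j 0) * U' j 0 = 1 := mem_unitaryGroup_iff'.mp (hU'u j 0)
    have h2 : (star (U' j 0) * U' j 0) 0 0 = (1 : Matrix (Fin 2) (Fin 2) ℂ) 0 0 := by
      rw [hmem]
    calc star (u j) ⬝ᵥ u j = (star (U' j 0) * U' j 0) 0 0 := by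
          simp [Matrix.mul_apply, Matrix.star_apply, dotProduct, hu]
      _ = 1 := by rw [h2, Matrix.one_apply_eq]
  have hvne : ∀ j, star (u j) ⬝ᵥ u j ≠ 0 := fun j => by rw [huu j]; exact one_ne_zero
  obtain ⟨t, -, htcard, htp⟩ := select u hvne Finset.univ
  have htc : 2 ^ n ≤ t.card := by
    have hcu : (Finset.univ : Finset (Fin (2 ^ (n + 1)))).card = 2 ^ (n + 1) := by simp
    rw [hcu] at htcard
    have : 2 ^ (n + 1) = 2 * 2 ^ n := by ring
    omega
  obtain ⟨t', ht't, ht'c⟩ := Finset.exists_subset_card_eq htc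
  set f := t'.orderEmbOfFin ht'c with hf
  have hft : ∀ j, f j ∈ t := fun j => ht't (t'.orderEmbOfFin_mem ht'c j)
  refine ⟨fun j k => U' (f j) k.succ, fun j k => hU'u (f j) k.succ, ?_⟩
  intro ψ hre hun
  obtain ⟨hg, -⟩ := hU'b (extState ψ) (ext_real ψ hre) (by rw [ext_norm]; exact hun)
  have key : ∀ j j' : Fin (2 ^ n),
      star (kronPow (fun k => U' (f j) k.succ) *ᵥ ψ) ⬝ᵥ
        (kronPow (fun k => U' (f j') k.succ) *ᵥ ψ) = if j = j' then 1 else 0 := by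
    intro j j'
    have hg' := hg (f j) (f j')
    rw [gram_fact (U' (f j)) (U' (f j')) ψ] at hg'
    by_cases hjj : j = j'
    · subst hjj
      rw [if_pos rfl] at hg' ⊢
      rw [show (star (fun b => U' (f j) 0 b 0) ⬝ᵥ fun b => U' (f j) 0 b 0) = 1 from huu (f j),
        one_mul] at hg'
      exact hg'
    · have hne : f j ≠ f j' := fun hc => hjj (f.injective hc)
      rw [if_neg hne] at hg'
      rw [if_neg hjj]
      rcases mul_eq_zero.mp hg' with h0 | h0
      · exact absurd h0 (htp _ (hft j) _ (hft j'))
      · exact h0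
  exact ⟨key, span_of_gram _ key⟩
end

section
/- For every n ≥ 4, there is no state-independent basis construction for real n-qubit states: there do not exist 2^n strings V_j = U₁^{(j)} ⊗ ⋯ ⊗ Uₙ^{(j)} of 2×2 complex unitary matrices such that for every real unit vector ψ ∈ (ℂ²)^{⊗n}, the 2^n vectors V_j ψ form an orthonormal basis of ℂ^{2^n}. -/
open Matrix

open Finset

/-!
If `V_j ψ ⟂ V_{j'} ψ` for every real unit vector `ψ`, the quadratic form of `V_jᴴ V_{j'}` vanishes
on real vectors, so `V_jᴴ V_{j'}` is antisymmetric. The `2^n - 1` unitaries `B_j = V_0ᴴ V_j`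
(`j ≠ 0`) are then antisymmetric with every `B_jᴴ B_{j'}` antisymmetric, which forces them to
anticommute pairwise. Pairwise anticommuting invertible `B_1, …, B_m` give `2^(m-1)` linearly
independent monomials `B_S = ∏_{i ∈ S} B_i` (`S` avoiding one fixed index): for `S ≠ T` some `B_k`
anticommutes with `B_S B_T⁻¹`, so the trace pairing `tr (B_S B_T⁻¹)` vanishes. Hence
`2^(2^n - 2) ≤ (2^n)^2`, which fails for `n ≥ 4`.
-/

theorem List.mul_prod_map_eq_smul {R A ι : Type*} [CommSemiring R] [Semiring A] [Algebra R A]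
    (b : A) (a : ι → A) (s : ι → R) (l : List ι) (h : ∀ i ∈ l, b * a i = s i • (a i * b)) :
    b * (l.map a).prod = (l.map s).prod • ((l.map a).prod * b) := by
  induction l with
  | nil => simp
  | cons i l ih =>
    simp only [List.map_cons, List.prod_cons, List.forall_mem_cons] at h ⊢
    rw [← mul_assoc, h.1, smul_mul_assoc, mul_assoc, ih h.2, mul_smul_comm, smul_smul,
      mul_assoc]

theorem Finset.exists_odd_card_erase_add_card_erase {ι : Type*} [DecidableEq ι]
    {S T : Finset ι} {a : ι} (haS : a ∉ S) (haT : a ∉ T) (hST : S ≠ T) :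
    ∃ k, Odd (#(S.erase k) + #(T.erase k)) := by
  by_cases hodd : Odd (#S + #T)
  · exact ⟨a, by rwa [erase_eq_of_notMem haS, erase_eq_of_notMem haT]⟩
  rw [Nat.not_odd_iff_even] at hodd
  have key : ∀ {S T : Finset ι}, Even (#S + #T) → ¬ S ⊆ T →
      ∃ k, Odd (#(S.erase k) + #(T.erase k)) := by
    intro S T hev hsub
    obtain ⟨k, hkS, hkT⟩ := not_subset.mp hsub
    refine ⟨k, ?_⟩
    rw [card_erase_of_mem hkS, erase_eq_of_notMem hkT]
    have := card_pos.mpr ⟨k, hkS⟩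
    rcases hev with ⟨m, hm⟩
    exact ⟨m - 1, by omega⟩
  by_cases hsub : S ⊆ T
  · have hsub' : ¬ T ⊆ S := fun h => hST (subset_antisymm hsub h)
    obtain ⟨k, hk⟩ := key (by rwa [add_comm]) hsub'
    exact ⟨k, by rwa [add_comm]⟩
  · exact key hodd hsub

namespace Matrix

variable {𝕜 n ι : Type*} [Field 𝕜] [Fintype n] [DecidableEq n]

theorem trace_eq_zero_of_mul_eq_neg [CharZero 𝕜] {B X : Matrix n n 𝕜} (hB : IsUnit B)
    (h : B * X = -(X * B)) : trace X = 0 := by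
  have hdet := (isUnit_iff_isUnit_det B).mp hB
  have hconj : trace (B * X * B⁻¹) = trace X := by
    rw [trace_mul_cycle, nonsing_inv_mul _ hdet, one_mul]
  rw [h, neg_mul, mul_assoc, mul_nonsing_inv _ hdet, mul_one, trace_neg] at hconj
  linear_combination -hconj / 2

theorem mul_nonsing_inv_eq_smul_of_mul_eq_smul {B X : Matrix n n 𝕜} {ε : 𝕜} (hε : ε * ε = 1)
    (hX : IsUnit X) (h : B * X = ε • (X * B)) : B * X⁻¹ = ε • (X⁻¹ * B) := by
  have hdet := (isUnit_iff_isUnit_det X).mp hX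
  have : X⁻¹ * B = ε • (B * X⁻¹) := by
    calc X⁻¹ * B = X⁻¹ * (B * X) * X⁻¹ := by
          rw [mul_assoc, mul_assoc, mul_nonsing_inv _ hdet, mul_one]
      _ = ε • (B * X⁻¹) := by
          rw [h, Matrix.mul_smul, Matrix.smul_mul, ← mul_assoc, nonsing_inv_mul _ hdet, one_mul]
  rw [this, smul_smul, hε, one_smul]

noncomputable def cliffordMonomial (B : ι → Matrix n n 𝕜) (S : Finset ι) : Matrix n n 𝕜 :=
  (S.toList.map B).prod

variable {B : ι → Matrix n n 𝕜}

theorem isUnit_cliffordMonomial (hB : ∀ i, IsUnit (B i)) (S : Finset ι) :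
    IsUnit (cliffordMonomial B S) :=
  List.prod_isUnit fun _ hm => by
    obtain ⟨i, -, rfl⟩ := List.mem_map.mp hm
    exact hB i

theorem mul_cliffordMonomial [DecidableEq ι]
    (hB : Pairwise fun i j => B i * B j = -(B j * B i)) (k : ι) (S : Finset ι) :
    B k * cliffordMonomial B S = (-1 : 𝕜) ^ #(S.erase k) • (cliffordMonomial B S * B k) := by
  have hsign : ∀ i ∈ S.toList, B k * B i = (if i = k then 1 else -1 : 𝕜) • (B i * B k) := by
    intro i _
    split_ifs with hik
    · rw [hik, one_smul]
    · rw [hB (Ne.symm hik), neg_one_smul]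
  rw [cliffordMonomial, List.mul_prod_map_eq_smul _ _ _ _ hsign, prod_map_toList, prod_ite,
    prod_const_one, one_mul, prod_const, filter_ne']

theorem trace_cliffordMonomial_mul_inv_eq_zero [CharZero 𝕜] [DecidableEq ι]
    (hB : ∀ i, IsUnit (B i)) (hanti : Pairwise fun i j => B i * B j = -(B j * B i))
    {S T : Finset ι} {a : ι} (haS : a ∉ S) (haT : a ∉ T) (hST : S ≠ T) :
    trace (cliffordMonomial B S * (cliffordMonomial B T)⁻¹) = 0 := by
  obtain ⟨k, hodd⟩ := exists_odd_card_erase_add_card_erase haS haT hST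
  have hsq : ((-1 : 𝕜) ^ #(T.erase k)) * (-1) ^ #(T.erase k) = 1 := by
    rw [← mul_pow, neg_one_mul, neg_neg, one_pow]
  have hT := mul_nonsing_inv_eq_smul_of_mul_eq_smul hsq (isUnit_cliffordMonomial hB T)
    (mul_cliffordMonomial hanti k T)
  refine trace_eq_zero_of_mul_eq_neg (hB k) ?_
  rw [← mul_assoc, mul_cliffordMonomial hanti k S, smul_mul_assoc, mul_assoc, hT,
    mul_smul_comm, smul_smul, ← pow_add, hodd.neg_one_pow, neg_one_smul, mul_assoc]

theorem linearIndependent_cliffordMonomial [CharZero 𝕜] [Nonempty n] [Fintype ι]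
    [DecidableEq ι] (hB : ∀ i, IsUnit (B i))
    (hanti : Pairwise fun i j => B i * B j = -(B j * B i)) (a : ι) :
    LinearIndependent 𝕜 fun S : (univ.erase a).powerset => cliffordMonomial B S := by
  rw [Fintype.linearIndependent_iff]
  intro c hc T
  have hmem : ∀ S : (univ.erase a).powerset, a ∉ (S : Finset ι) := fun S h =>
    notMem_erase a univ (mem_powerset.mp S.2 h)
  have htrace := congrArg (fun X => trace (X * (cliffordMonomial B T)⁻¹)) hc
  simp only [sum_mul, smul_mul_assoc, trace_sum, trace_smul, zero_mul, trace_zero] at htrace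
  rw [sum_eq_single T (fun S _ hST => by
      rw [trace_cliffordMonomial_mul_inv_eq_zero hB hanti (hmem S) (hmem T)
        (Subtype.coe_injective.ne hST), smul_zero])
    (fun h => absurd (mem_univ T) h),
    mul_nonsing_inv _ ((isUnit_iff_isUnit_det _).mp (isUnit_cliffordMonomial hB T)),
    trace_one, smul_eq_mul] at htrace
  exact (mul_eq_zero.mp htrace).resolve_right (Nat.cast_ne_zero.mpr Fintype.card_ne_zero)

theorem two_pow_card_sub_one_le_of_anticommute [CharZero 𝕜] [Nonempty n] [Fintype ι]
    (B : ι → Matrix n n 𝕜) (hB : ∀ i, IsUnit (B i))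
    (hanti : Pairwise fun i j => B i * B j = -(B j * B i)) :
    2 ^ (Fintype.card ι - 1) ≤ Fintype.card n ^ 2 := by
  classical
  rcases isEmpty_or_nonempty ι with hι | ⟨⟨a⟩⟩
  · simp [Fintype.card_eq_zero, Nat.one_le_iff_ne_zero]
  have := (linearIndependent_cliffordMonomial hB hanti a).fintype_card_le_finrank
  rwa [Module.finrank_matrix, Fintype.card_coe, card_powerset, card_erase_of_mem (mem_univ a),
    card_univ, Module.finrank_self, mul_one, ← sq] at this

theorem transpose_eq_neg_of_forall_real_unit {κ : Type*} [Fintype κ] [DecidableEq κ]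
    (M : Matrix κ κ ℂ)
    (h : ∀ ψ : κ → ℂ, (∀ x, (ψ x).im = 0) → star ψ ⬝ᵥ ψ = 1 → star ψ ⬝ᵥ (M *ᵥ ψ) = 0) :
    Mᵀ = -M := by
  have hscale : ∀ (ψ : κ → ℂ) (c : ℝ), (∀ x, (ψ x).im = 0) → (c : ℂ) ^ 2 * (star ψ ⬝ᵥ ψ) = 1 →
      star ψ ⬝ᵥ (M *ᵥ ψ) = 0 := by
    intro ψ c hre hc
    have hc0 : (c : ℂ) ^ 2 ≠ 0 := left_ne_zero_of_mul_eq_one hc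
    have := h ((c : ℂ) • ψ) (fun x => by simp [hre x])
      (by rw [star_smul, Complex.star_def, Complex.conj_ofReal, smul_dotProduct,
        dotProduct_smul, smul_eq_mul, smul_eq_mul, ← mul_assoc, ← sq, hc])
    rw [star_smul, Complex.star_def, Complex.conj_ofReal, mulVec_smul, smul_dotProduct,
      dotProduct_smul, smul_eq_mul, smul_eq_mul, ← mul_assoc, ← sq] at this
    exact (mul_eq_zero.mp this).resolve_left hc0
  have hstar : ∀ x : κ, star (Pi.single x 1 : κ → ℂ) = Pi.single x 1 := fun x => by
    ext z; by_cases hz : z = x <;> simp [hz]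
  have hdiag : ∀ x, M x x = 0 := fun x => by
    simpa [hstar, mulVec_single] using
      hscale (Pi.single x 1) 1 (fun z => by by_cases hz : z = x <;> simp [hz]) (by simp [hstar])
  ext x y
  by_cases hxy : x = y
  · simp [hxy, hdiag]
  have := hscale (Pi.single x 1 + Pi.single y 1) (Real.sqrt 2)⁻¹
    (fun z => by simp [Pi.single_apply, apply_ite Complex.im])
    (by simp [hxy, Ne.symm hxy]; norm_num [← Complex.ofReal_pow])
  simp [hstar, mulVec_add, mulVec_single, hdiag] at this
  simp only [transpose_apply, neg_apply]
  linear_combination this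

theorem mul_eq_neg_mul_of_transpose_eq_neg {κ R : Type*} [Fintype κ] [DecidableEq κ]
    [CommRing R] [StarRing R] {A B : Matrix κ κ R} (hA : A ∈ unitaryGroup κ R)
    (hAt : Aᵀ = -A) (hBt : Bᵀ = -B) (hAB : (Aᴴ * B)ᵀ = -(Aᴴ * B)) : A * B = -(B * A) := by
  have hBA : B * Aᴴ = -(Aᴴ * B) := by
    rw [← hAB, transpose_mul, hBt, ← conjTranspose_transpose_eq_transpose_conjTranspose, hAt,
      conjTranspose_neg, neg_mul_neg]
  have hAAh : A * Aᴴ = 1 := mem_unitaryGroup_iff.mp hA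
  calc A * B = A * (B * Aᴴ) * A := by
        rw [mul_assoc, mul_assoc, ← star_eq_conjTranspose, mem_unitaryGroup_iff'.mp hA, mul_one]
    _ = -(B * A) := by rw [hBA, mul_neg, neg_mul, ← mul_assoc, hAAh, one_mul]

end Matrix

theorem two_pow_card_sub_two_le_of_forall_real_orthogonal {ι κ : Type*} [Fintype ι]
    [Fintype κ] [DecidableEq κ] [Nonempty κ] (V : ι → Matrix κ κ ℂ)
    (hV : ∀ j, V j ∈ unitaryGroup κ ℂ)
    (h : ∀ ψ : κ → ℂ, (∀ x, (ψ x).im = 0) → star ψ ⬝ᵥ ψ = 1 →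
      Pairwise fun j j' => star (V j *ᵥ ψ) ⬝ᵥ (V j' *ᵥ ψ) = 0) :
    2 ^ (Fintype.card ι - 2) ≤ Fintype.card κ ^ 2 := by
  classical
  rcases isEmpty_or_nonempty ι with hι | ⟨⟨j₀⟩⟩
  · simp [Fintype.card_eq_zero, Nat.one_le_iff_ne_zero]
  have hskew : ∀ j j', j ≠ j' → ((V j)ᴴ * V j')ᵀ = -((V j)ᴴ * V j') := fun j j' hjj' =>
    transpose_eq_neg_of_forall_real_unit _ fun ψ hre hunit => by
      rw [← mulVec_mulVec, dotProduct_mulVec, ← star_mulVec]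
      exact h ψ hre hunit hjj'
  let B : {j // j ≠ j₀} → Matrix κ κ ℂ := fun j => (V j₀)ᴴ * V j
  have hBU : ∀ j, B j ∈ unitaryGroup κ ℂ := fun j =>
    Submonoid.mul_mem _ (Unitary.star_mem (hV j₀)) (hV j)
  have hBB : ∀ j j', (B j)ᴴ * B j' = (V j)ᴴ * V j' := fun j j' => by
    have hV₀ : V j₀ * (V j₀)ᴴ = 1 := mem_unitaryGroup_iff.mp (hV j₀)
    rw [conjTranspose_mul, conjTranspose_conjTranspose, mul_assoc, ← mul_assoc (V j₀), hV₀,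
      one_mul]
  have hanti : Pairwise fun j j' => B j * B j' = -(B j' * B j) := fun j j' hjj' =>
    mul_eq_neg_mul_of_transpose_eq_neg (hBU j) (hskew _ _ j.2.symm) (hskew _ _ j'.2.symm)
      (by rw [hBB]; exact hskew _ _ (Subtype.coe_injective.ne hjj'))
  have := two_pow_card_sub_one_le_of_anticommute B
    (fun j => .of_mul_eq_one _ (mem_unitaryGroup_iff.mp (hBU j))) hanti
  rwa [Fintype.card_subtype_compl, Fintype.card_subtype_eq, Nat.sub_sub] at this

section kronPow

variable {n : ℕ}

theorem kronPow_mul (U W : Fin n → Matrix (Fin 2) (Fin 2) ℂ) :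
    kronPow U * kronPow W = kronPow (U * W) := by
  ext x y
  simp only [kronPow, mul_apply, of_apply, Pi.mul_apply, Fintype.prod_sum, ← prod_mul_distrib]

theorem conjTranspose_kronPow (U : Fin n → Matrix (Fin 2) (Fin 2) ℂ) :
    (kronPow U)ᴴ = kronPow fun k => (U k)ᴴ := by
  ext x y
  simp [kronPow, star_prod]

theorem kronPow_one : kronPow (1 : Fin n → Matrix (Fin 2) (Fin 2) ℂ) = 1 := by
  ext x y
  simp [kronPow, one_apply, prod_boole, funext_iff]

theorem kronPow_mem_unitaryGroup {U : Fin n → Matrix (Fin 2) (Fin 2) ℂ}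
    (hU : ∀ k, U k ∈ unitaryGroup (Fin 2) ℂ) : kronPow U ∈ unitaryGroup (Fin n → Fin 2) ℂ := by
  rw [mem_unitaryGroup_iff', star_eq_conjTranspose, conjTranspose_kronPow, kronPow_mul,
    ← kronPow_one]
  congr 1
  funext k
  exact mem_unitaryGroup_iff'.mp (hU k)

end kronPow

/-- For every `n ≥ 4` there is no state-independent basis construction for real `n`-qubit
states: no `2^n` strings of local `2×2` unitaries map every real unit vector of
`(ℂ²)^{⊗n}` to an orthonormal basis of `ℂ^{2^n}`. -/
theorem stmt14 (n : ℕ) (hn : 4 ≤ n) :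
    ¬ ∃ U : Fin (2 ^ n) → Fin n → Matrix (Fin 2) (Fin 2) ℂ,
      (∀ j k, U j k ∈ Matrix.unitaryGroup (Fin 2) ℂ) ∧
      ∀ ψ : (Fin n → Fin 2) → ℂ, (∀ x, (ψ x).im = 0) → star ψ ⬝ᵥ ψ = 1 →
        IsONBasis (fun j => kronPow (U j) *ᵥ ψ) := by
  rintro ⟨U, hU, hONB⟩
  have hbound := two_pow_card_sub_two_le_of_forall_real_orthogonal (fun j => kronPow (U j))
    (fun j => kronPow_mem_unitaryGroup (hU j))
    (fun ψ hre hunit j j' hjj' => by simpa [hjj'] using (hONB ψ hre hunit).1 j j')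
  rw [Fintype.card_fin, Fintype.card_fun, Fintype.card_fin, Fintype.card_fin, ← pow_mul,
    Nat.pow_le_pow_iff_right one_lt_two] at hbound
  have h16 : 2 ^ n = 2 ^ (n - 4) * 16 := by
    rw [show 16 = 2 ^ 4 by norm_num, ← pow_add, Nat.sub_add_cancel hn]
  have := Nat.lt_two_pow_self (n := n - 4)
  omega
end
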